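/- Let r ≥ 1 and M ≥ 1 be integers, let w_1, …, w_r be strictly positive reals with w̄ = max_{1≤j≤r} w_j, and let φ : (0,1) → (0,∞) be a decreasing bijection with inverse φ^{-1} : (0,∞) → (0,1). Let t_j^{[i]} ∈ R for j ∈ {1,…,r} and i ∈ {0,1,…,M} be such that for each j the values t_j^{[1]}, …, t_j^{[M]} are pairwise distinct. Define p_j^{[i]} = (1/(M+1)) (1/2 + Σ_{k=1}^{M} 1(t_j^{[k]} ≥ t_j^{[i]})) ∈ (0,1), W^{[i]} = Σ_{j=1}^{r} w_j φ(p_j^{[i]}), and p* = (1/M) Σ_{k=1}^{M} 1(W^{[k]} ≥ W^{[0]}). Then for every j0 ∈ {1,…,r}, p* ≤ r · φ^{-1}( (w_{j0}/(r w̄)) · φ(p_{j0}^{[0]}) ) + 2r/M. -/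

import Mathlib

/-!
The event `W^{[0]} ≤ W^{[k]}` forces one summand `w_j φ(p_j^{[k]})` to be at least
`w_{j0} φ(p_{j0}^{[0]}) / r`, hence, since `w_j ≤ w̄` and `φ` is decreasing, forces
`p_j^{[k]} ≤ q := φ⁻¹((w_{j0}/(r w̄)) φ(p_{j0}^{[0]}))` for some `j`. A union bound over `j`
reduces the claim to the fact that rank p-values are super-uniform: because the replicates are
pairwise distinct, their ranks are pairwise distinct, so at most `q M + 1` of the `p_j^{[k]}`
are `≤ q`.
-/

open Finset

/-- Rank-based approximate p-value of the `i`-th value among `M` bootstrap replicates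
`t 1, …, t M` (with the observed statistic being `t 0`). -/
noncomputable def rankPval (M : ℕ) (t : ℕ → ℝ) (i : ℕ) : ℝ :=
  (1 / ((M : ℝ) + 1)) *
    (1 / 2 + ∑ k ∈ Finset.Icc 1 M, if t i ≤ t k then (1 : ℝ) else 0)

namespace Finset

variable {α β ι : Type*}

theorem strictAntiOn_card_filter_le [LinearOrder β] (s : Finset α) (t : α → β) :
    StrictAntiOn (fun y => #{l ∈ s | y ≤ t l}) (t '' s) := by
  rintro _ ⟨k, hk, rfl⟩ _ _ hlt
  refine card_lt_card <| (ssubset_iff_of_subset fun l hl => ?_).2 ⟨k, ?_, ?_⟩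
  · simp only [mem_filter] at hl ⊢
    exact ⟨hl.1, hlt.le.trans hl.2⟩
  · simpa using hk
  · simp [hlt]

theorem injOn_card_filter_le [LinearOrder β] {s : Finset α} {t : α → β} (ht : Set.InjOn t s) :
    Set.InjOn (fun k => #{l ∈ s | t k ≤ t l}) s :=
  (strictAntiOn_card_filter_le s t).injOn.comp ht (Set.mapsTo_image t s)

theorem card_le_of_injOn_of_one_le_of_le {s : Finset α} {f : α → ℕ} {y : ℝ} (hy : 0 ≤ y)
    (hf : Set.InjOn f s) (hbound : ∀ k ∈ s, 1 ≤ f k ∧ (f k : ℝ) ≤ y) : (#s : ℝ) ≤ y := by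
  have hcard : #s ≤ #(Icc 1 ⌊y⌋₊) :=
    card_le_card_of_injOn f (fun k hk => mem_Icc.2
      ⟨(hbound k hk).1, Nat.le_floor (hbound k hk).2⟩) hf
  rw [Nat.card_Icc, Nat.add_sub_cancel] at hcard
  exact (Nat.cast_le.2 hcard).trans (Nat.floor_le hy)

theorem card_filter_le_sum_card_filter [Fintype ι] (s : Finset α) (P : α → Prop)
    [DecidablePred P] (Q : ι → α → Prop) [∀ j, DecidablePred (Q j)]
    (hcover : ∀ k ∈ s, P k → ∃ j, Q j k) :
    #{k ∈ s | P k} ≤ ∑ j, #{k ∈ s | Q j k} := by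
  classical
  refine (card_le_card fun k hk => ?_).trans card_biUnion_le
  obtain ⟨hks, hPk⟩ := mem_filter.1 hk
  obtain ⟨j, hj⟩ := hcover k hks hPk
  exact mem_biUnion.2 ⟨j, mem_univ j, mem_filter.2 ⟨hks, hj⟩⟩

end Finset

theorem exists_div_le_of_le_sum_mul {ι : Type*} [Fintype ι] [Nonempty ι] {w b : ι → ℝ}
    {wbar A : ℝ} (hwbar : 0 < wbar) (hw : ∀ j, w j ≤ wbar) (hb : ∀ j, 0 ≤ b j)
    (hA : A ≤ ∑ j, w j * b j) :
    ∃ j, A / (Fintype.card ι * wbar) ≤ b j := by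
  have hcard : (0 : ℝ) < Fintype.card ι := Nat.cast_pos.2 Fintype.card_pos
  have hsum : ∑ _j : ι, A / Fintype.card ι ≤ ∑ j, w j * b j := by
    rwa [sum_const, card_univ, nsmul_eq_mul, mul_div_cancel₀ _ hcard.ne']
  obtain ⟨j, -, hj⟩ := exists_le_of_sum_le univ_nonempty hsum
  have h := (div_le_iff₀ hcard).1 (hj.trans (mul_le_mul_of_nonneg_right (hw j) (hb j)))
  refine ⟨j, (div_le_iff₀ (by positivity)).2 ?_⟩
  linarith

theorem rankPval_eq (M : ℕ) (t : ℕ → ℝ) (i : ℕ) :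
    rankPval M t i = (1 / 2 + #{l ∈ Icc 1 M | t i ≤ t l}) / ((M : ℝ) + 1) := by
  rw [rankPval, sum_boole, one_div_mul_eq_div]

theorem rankPval_mem_Ioo (M : ℕ) (t : ℕ → ℝ) (i : ℕ) : rankPval M t i ∈ Set.Ioo 0 1 := by
  have hrank : #{l ∈ Icc 1 M | t i ≤ t l} ≤ M :=
    (card_filter_le _ _).trans (Nat.card_Icc 1 M).le
  have hrank' : (#{l ∈ Icc 1 M | t i ≤ t l} : ℝ) ≤ M := by exact_mod_cast hrank
  rw [rankPval_eq, Set.mem_Ioo, div_lt_one (by positivity)]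
  exact ⟨by positivity, by linarith⟩

theorem card_rankPval_le {M : ℕ} {t : ℕ → ℝ} (ht : Set.InjOn t (Icc 1 M)) {q : ℝ}
    (hq₀ : 0 ≤ q) (hq₁ : q ≤ 1) :
    (#{k ∈ Icc 1 M | rankPval M t k ≤ q} : ℝ) ≤ q * M + 1 := by
  refine card_le_of_injOn_of_one_le_of_le (by positivity)
    ((injOn_card_filter_le ht).mono (coe_subset.2 (filter_subset _ _))) fun k hk => ?_
  obtain ⟨hkM, hkq⟩ := mem_filter.1 hk
  refine ⟨card_pos.2 ⟨k, mem_filter.2 ⟨hkM, le_rfl⟩⟩, ?_⟩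
  rw [rankPval_eq, div_le_iff₀ (by positivity)] at hkq
  nlinarith

theorem exists_le_of_weighted_sum_le {ι : Type*} [Fintype ι] {w : ι → ℝ} {wbar : ℝ}
    {φ : ℝ → ℝ} (hw : ∀ j, 0 < w j) (hwbar : 0 < wbar) (hwle : ∀ j, w j ≤ wbar)
    (hφanti : StrictAntiOn φ (Set.Ioo 0 1)) (hφpos : Set.MapsTo φ (Set.Ioo 0 1) (Set.Ioi 0))
    {p p' : ι → ℝ} (hp : ∀ j, p j ∈ Set.Ioo 0 1) (hp' : ∀ j, p' j ∈ Set.Ioo 0 1) {j0 : ι}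
    {q : ℝ} (hq : q ∈ Set.Ioo 0 1) (hφq : φ q = w j0 / (Fintype.card ι * wbar) * φ (p j0))
    (hle : ∑ j, w j * φ (p j) ≤ ∑ j, w j * φ (p' j)) :
    ∃ j, p' j ≤ q := by
  have : Nonempty ι := ⟨j0⟩
  have hA : w j0 * φ (p j0) ≤ ∑ j, w j * φ (p' j) :=
    (single_le_sum (fun j _ => (mul_pos (hw j) (hφpos (hp j))).le) (mem_univ j0)).trans hle
  obtain ⟨j, hj⟩ := exists_div_le_of_le_sum_mul hwbar hwle
    (fun j => (hφpos (hp' j)).le) hA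
  rw [← div_mul_eq_mul_div, ← hφq] at hj
  exact ⟨j, (hφanti.le_iff_ge hq (hp' j)).1 hj⟩

theorem one_div_mul_le_of_le_mul_add_one {M : ℕ} {N r q : ℝ} (hr : 0 ≤ r) (hq : 0 ≤ q)
    (hN : N ≤ r * (q * M + 1)) : 1 / (M : ℝ) * N ≤ r * q + 2 * r / M := by
  rcases M.eq_zero_or_pos with rfl | hM
  · simp only [CharP.cast_eq_zero, div_zero, zero_mul, add_zero]
    positivity
  · calc _ ≤ 1 / (M : ℝ) * (r * (q * M + 1)) := by gcongr
      _ = r * q + r / M := by field_simp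
      _ ≤ r * q + 2 * r / M := by gcongr; linarith

theorem stmt11_general (r M : ℕ)
    (w : Fin r → ℝ) (hw : ∀ j, 0 < w j)
    (wbar : ℝ) (hwbar : IsGreatest (Set.range w) wbar)
    (φ φinv : ℝ → ℝ)
    (hφanti : StrictAntiOn φ (Set.Ioo 0 1))
    (hφbij : Set.BijOn φ (Set.Ioo (0 : ℝ) 1) (Set.Ioi (0 : ℝ)))
    (hφinv : Set.InvOn φinv φ (Set.Ioo (0 : ℝ) 1) (Set.Ioi (0 : ℝ)))
    (t : Fin r → ℕ → ℝ)
    (hdistinct : ∀ j, Set.InjOn (t j) (Finset.Icc 1 M))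
    (j0 : Fin r) :
    (1 / (M : ℝ)) * (∑ k ∈ Finset.Icc 1 M,
        if (∑ j, w j * φ (rankPval M (t j) 0)) ≤ (∑ j, w j * φ (rankPval M (t j) k))
          then (1 : ℝ) else 0)
      ≤ (r : ℝ) * φinv ((w j0 / ((r : ℝ) * wbar)) * φ (rankPval M (t j0) 0))
          + 2 * r / M := by
  have hwbar_pos : 0 < wbar := by obtain ⟨j, rfl⟩ := hwbar.1; exact hw j
  have hc : (w j0 / ((r : ℝ) * wbar)) * φ (rankPval M (t j0) 0) ∈ Set.Ioi 0 :=
    mul_pos (div_pos (hw j0) (mul_pos (Nat.cast_pos.2 j0.pos) hwbar_pos))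
      (hφbij.mapsTo (rankPval_mem_Ioo M (t j0) 0))
  set q := φinv ((w j0 / ((r : ℝ) * wbar)) * φ (rankPval M (t j0) 0))
  have hq : q ∈ Set.Ioo 0 1 := (hφbij.symm hφinv.symm).mapsTo hc
  have hcover (k : ℕ) (_ : k ∈ Icc 1 M) (hle : (∑ j, w j * φ (rankPval M (t j) 0)) ≤
      (∑ j, w j * φ (rankPval M (t j) k))) : ∃ j, rankPval M (t j) k ≤ q :=
    exists_le_of_weighted_sum_le hw hwbar_pos (fun j => hwbar.2 ⟨j, rfl⟩) hφanti hφbij.mapsTo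
      (fun j => rankPval_mem_Ioo M (t j) 0) (fun j => rankPval_mem_Ioo M (t j) k) hq
      (by rw [Fintype.card_fin]; exact hφinv.2.eq hc) hle
  have hcount : (#{k ∈ Icc 1 M | (∑ j, w j * φ (rankPval M (t j) 0)) ≤
      (∑ j, w j * φ (rankPval M (t j) k))} : ℝ) ≤ r * (q * M + 1) :=
    calc _ ≤ ∑ j, (#{k ∈ Icc 1 M | rankPval M (t j) k ≤ q} : ℝ) := by
          exact_mod_cast card_filter_le_sum_card_filter _ _ _ hcover
      _ ≤ ∑ _j : Fin r, (q * M + 1) :=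
          sum_le_sum fun j _ => card_rankPval_le (hdistinct j) hq.1.le hq.2.le
      _ = r * (q * M + 1) := by rw [sum_const, card_univ, Fintype.card_fin, nsmul_eq_mul]
  rw [sum_boole]
  exact one_div_mul_le_of_le_mul_add_one r.cast_nonneg hq.1.le hcount

/-- Deterministic bound on the approximate p-value of a Fisher-type
combined test: with `p_j^{[i]}` the rank-based approximate p-values,
`W^{[i]} = Σ_j w_j φ(p_j^{[i]})` and `p* = (1/M) Σ_{k=1}^M 1(W^{[k]} ≥ W^{[0]})`, one has,
for every `j0`, `p* ≤ r φ⁻¹((w_{j0}/(r w̄)) φ(p_{j0}^{[0]})) + 2r/M`, provided the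
replicates `t_j^{[1]}, …, t_j^{[M]}` are pairwise distinct for each `j`. Here
`φ : (0,1) → (0,∞)` is a decreasing bijection with inverse `φinv`, the weights `w_j` are
strictly positive, and `w̄ = max_j w_j`. -/
theorem stmt11 (r M : ℕ) (hr : 1 ≤ r) (hM : 1 ≤ M)
    (w : Fin r → ℝ) (hw : ∀ j, 0 < w j)
    (wbar : ℝ) (hwbar : IsGreatest (Set.range w) wbar)
    (φ φinv : ℝ → ℝ)
    (hφanti : StrictAntiOn φ (Set.Ioo 0 1))
    (hφbij : Set.BijOn φ (Set.Ioo (0 : ℝ) 1) (Set.Ioi (0 : ℝ)))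
    (hφinv : Set.InvOn φinv φ (Set.Ioo (0 : ℝ) 1) (Set.Ioi (0 : ℝ)))
    (t : Fin r → ℕ → ℝ)
    (hdistinct : ∀ j, Set.InjOn (t j) (Finset.Icc 1 M))
    (j0 : Fin r) :
    (1 / (M : ℝ)) * (∑ k ∈ Finset.Icc 1 M,
        if (∑ j, w j * φ (rankPval M (t j) 0)) ≤ (∑ j, w j * φ (rankPval M (t j) k))
          then (1 : ℝ) else 0)
      ≤ (r : ℝ) * φinv ((w j0 / ((r : ℝ) * wbar)) * φ (rankPval M (t j0) 0))
          + 2 * r / M :=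
  stmt11_general r M w hw wbar hwbar φ φinv hφanti hφbij hφinv t hdistinct j0
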